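/- arXiv:2412.07645 — 2 statements merged into one kernel-verified Lean document; each statement's English description precedes it below -/
import Mathlib

section
/- Let Ω ⊆ ℝ^N be Lebesgue measurable with |Ω| < ∞ and r < -N. Then the upper φ-shell Minkowski content M̄_φ^r(∞,Ω) converges to the upper Minkowski content M̄^r(∞,Ω) as φ → +∞. -/
open MeasureTheory Filter Set
open scoped ENNReal NNReal Topology

noncomputable section

/-- The `[a,b)`-shell centered at the origin in `ℝ^N`. -/
def shell (N : ℕ) (a b : ℝ) : Set (EuclideanSpace ℝ (Fin N)) :=
  {x | a ≤ ‖x‖ ∧ ‖x‖ < b}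

/-- The complement of the open ball `B_t(0)` in `ℝ^N`. -/
def farBall (N : ℕ) (t : ℝ) : Set (EuclideanSpace ℝ (Fin N)) :=
  {x | t ≤ ‖x‖}

/-- Upper φ-shell Minkowski content of `Ω` at infinity. -/
def upperShellContent (N : ℕ) (Ω : Set (EuclideanSpace ℝ (Fin N))) (φ r : ℝ) : ℝ≥0∞ :=
  Filter.limsup (fun t : ℝ =>
    volume (shell N t (φ * t) ∩ Ω) / ENNReal.ofReal (t ^ ((N : ℝ) + r))) Filter.atTop

/-- Lower φ-shell Minkowski content of `Ω` at infinity. -/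
def lowerShellContent (N : ℕ) (Ω : Set (EuclideanSpace ℝ (Fin N))) (φ r : ℝ) : ℝ≥0∞ :=
  Filter.liminf (fun t : ℝ =>
    volume (shell N t (φ * t) ∩ Ω) / ENNReal.ofReal (t ^ ((N : ℝ) + r))) Filter.atTop

/-- Upper Minkowski content of `Ω` at infinity. -/
def upperContent (N : ℕ) (Ω : Set (EuclideanSpace ℝ (Fin N))) (r : ℝ) : ℝ≥0∞ :=
  Filter.limsup (fun t : ℝ =>
    volume (farBall N t ∩ Ω) / ENNReal.ofReal (t ^ ((N : ℝ) + r))) Filter.atTop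

/-- Lower Minkowski content of `Ω` at infinity. -/
def lowerContent (N : ℕ) (Ω : Set (EuclideanSpace ℝ (Fin N))) (r : ℝ) : ℝ≥0∞ :=
  Filter.liminf (fun t : ℝ =>
    volume (farBall N t ∩ Ω) / ENNReal.ofReal (t ^ ((N : ℝ) + r))) Filter.atTop

/-- Upper φ-shell Minkowski dimension of `Ω` at infinity, as an extended real. -/
def upperShellDim (N : ℕ) (Ω : Set (EuclideanSpace ℝ (Fin N))) (φ : ℝ) : EReal :=
  sInf ((fun r : ℝ => (r : EReal)) '' {r : ℝ | upperShellContent N Ω φ r = 0})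

/-- Lower φ-shell Minkowski dimension of `Ω` at infinity, as an extended real. -/
def lowerShellDim (N : ℕ) (Ω : Set (EuclideanSpace ℝ (Fin N))) (φ : ℝ) : EReal :=
  sInf ((fun r : ℝ => (r : EReal)) '' {r : ℝ | lowerShellContent N Ω φ r = 0})

/-! Cover `{‖x‖ ≥ t}` by the shells `[φᵏ t, φᵏ⁺¹ t)`. If every shell starting beyond `t` has
content at most `S` relative to its own scale `s ^ (N + r)`, summing the geometric series bounds
the content of the far region by `S / (1 - φ ^ (N + r))`; hence
`M̄^r ≤ M̄_φ^r / (1 - φ ^ (N + r))`. Together with the trivial `M̄_φ^r ≤ M̄^r` and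
`φ ^ (N + r) → 0`, this squeezes `M̄_φ^r` to `M̄^r`. -/

lemma upperShellContent_le_upperContent (N : ℕ) (Ω : Set (EuclideanSpace ℝ (Fin N)))
    (φ r : ℝ) :
    upperShellContent N Ω φ r ≤ upperContent N Ω r :=
  limsup_le_limsup <| Eventually.of_forall fun _ ↦
    ENNReal.div_le_div_right (measure_mono (inter_subset_inter_left _ fun _ hx ↦ hx.1)) _

lemma farBall_subset_iUnion_shell (N : ℕ) {φ t : ℝ} (hφ : 1 < φ) (ht : 0 < t) :
    farBall N t ⊆ ⋃ k : ℕ, shell N (φ ^ k * t) (φ * (φ ^ k * t)) := by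
  intro x (hx : t ≤ ‖x‖)
  obtain ⟨k, hk, hk'⟩ := exists_nat_pow_near ((one_le_div ht).2 hx) hφ
  refine mem_iUnion.2 ⟨k, (le_div_iff₀ ht).1 hk, ?_⟩
  rw [← mul_assoc, ← pow_succ']
  exact (div_lt_iff₀ ht).1 hk'

lemma measure_farBall_inter_le_tsum {N : ℕ} (μ : Measure (EuclideanSpace ℝ (Fin N)))
    (Ω : Set (EuclideanSpace ℝ (Fin N))) {φ t : ℝ} (hφ : 1 < φ) (ht : 0 < t) :
    μ (farBall N t ∩ Ω) ≤ ∑' k : ℕ, μ (shell N (φ ^ k * t) (φ * (φ ^ k * t)) ∩ Ω) := by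
  refine (measure_mono ?_).trans (measure_iUnion_le _)
  rw [← iUnion_inter]
  exact inter_subset_inter_left _ (farBall_subset_iUnion_shell N hφ ht)

lemma ofReal_rpow_pow_mul (p : ℝ) (k : ℕ) {φ t : ℝ} (hφ : 0 ≤ φ) (ht : 0 ≤ t) :
    ENNReal.ofReal ((φ ^ k * t) ^ p) = ENNReal.ofReal (φ ^ p) ^ k * ENNReal.ofReal (t ^ p) := by
  rw [Real.mul_rpow (by positivity) ht, ← Real.rpow_pow_comm hφ,
    ENNReal.ofReal_mul (by positivity), ENNReal.ofReal_pow (by positivity)]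

lemma div_rpow_le_iSup_div_rpow_div {a g : ℝ → ℝ≥0∞} {φ p t : ℝ} (hφ : 1 ≤ φ)
    (ht : 0 < t) (hcov : a t ≤ ∑' k : ℕ, g (φ ^ k * t)) :
    a t / ENNReal.ofReal (t ^ p) ≤
      (⨆ s ∈ Ici t, g s / ENNReal.ofReal (s ^ p)) / (1 - ENNReal.ofReal (φ ^ p)) := by
  set S := ⨆ s ∈ Ici t, g s / ENNReal.ofReal (s ^ p)
  set q := ENNReal.ofReal (φ ^ p)
  have hq : q ≠ 0 := by simpa [q] using Real.rpow_pos_of_pos (by linarith) p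
  have hterm (k : ℕ) : g (φ ^ k * t) / ENNReal.ofReal (t ^ p) ≤ S * q ^ k := by
    have hs : t ≤ φ ^ k * t := le_mul_of_one_le_left ht.le (one_le_pow₀ hφ)
    calc g (φ ^ k * t) / ENNReal.ofReal (t ^ p)
        = g (φ ^ k * t) / ENNReal.ofReal ((φ ^ k * t) ^ p) * q ^ k := by
          rw [ofReal_rpow_pow_mul p k (by linarith) ht.le, ← ENNReal.mul_div_right_comm,
            mul_comm _ (q ^ k), ENNReal.mul_div_mul_left _ _ (pow_ne_zero _ hq)
              (ENNReal.pow_ne_top ENNReal.ofReal_ne_top)]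
      _ ≤ S * q ^ k := by gcongr; exact le_iSup₂_of_le _ hs le_rfl
  calc a t / ENNReal.ofReal (t ^ p) ≤ ∑' k, g (φ ^ k * t) / ENNReal.ofReal (t ^ p) := by
        simp only [div_eq_mul_inv, ENNReal.tsum_mul_right]
        gcongr
    _ ≤ ∑' k, S * q ^ k := ENNReal.tsum_le_tsum hterm
    _ = S / (1 - q) := by rw [ENNReal.tsum_mul_left, ENNReal.tsum_geometric]; rfl

lemma limsup_div_rpow_mul_le {a g : ℝ → ℝ≥0∞} {φ p : ℝ} (hφ : 1 < φ) (hp : p < 0)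
    (hcov : ∀ t > 0, a t ≤ ∑' k : ℕ, g (φ ^ k * t)) :
    limsup (fun t ↦ a t / ENNReal.ofReal (t ^ p)) atTop * (1 - ENNReal.ofReal (φ ^ p)) ≤
      limsup (fun t ↦ g t / ENNReal.ofReal (t ^ p)) atTop := by
  have hq : 1 - ENNReal.ofReal (φ ^ p) ≠ 0 :=
    (tsub_pos_of_lt (ENNReal.ofReal_lt_one.2 (Real.rpow_lt_one_of_one_lt_of_neg hφ hp))).ne'
  have hq' : 1 - ENNReal.ofReal (φ ^ p) ≠ ∞ :=
    ne_top_of_le_ne_top ENNReal.one_ne_top tsub_le_self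
  rw [← ENNReal.le_div_iff_mul_le (Or.inl hq) (Or.inl hq'),
    (atTop_basis (α := ℝ)).limsup_eq_iInf_iSup (u := fun t ↦ g t / ENNReal.ofReal (t ^ p))]
  simp only [iInf_true]
  rw [ENNReal.iInf_div_of_ne hq hq']
  refine le_iInf fun t₀ ↦ limsup_le_of_le (by isBoundedDefault) ?_
  filter_upwards [eventually_ge_atTop t₀, eventually_gt_atTop 0] with t ht₀ ht
  refine (div_rpow_le_iSup_div_rpow_div hφ.le ht (hcov t ht)).trans ?_
  exact ENNReal.div_le_div_right (biSup_mono fun _ hs ↦ ht₀.trans hs) _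

lemma upperContent_mul_le_upperShellContent (N : ℕ) (Ω : Set (EuclideanSpace ℝ (Fin N)))
    {φ r : ℝ} (hφ : 1 < φ) (hp : (N : ℝ) + r < 0) :
    upperContent N Ω r * (1 - ENNReal.ofReal (φ ^ ((N : ℝ) + r))) ≤
      upperShellContent N Ω φ r := by
  unfold upperContent upperShellContent
  exact limsup_div_rpow_mul_le hφ hp fun _ ht ↦ measure_farBall_inter_le_tsum volume Ω hφ ht

lemma tendsto_one_sub_ofReal_rpow_atTop {p : ℝ} (hp : p < 0) :
    Tendsto (fun φ : ℝ ↦ 1 - ENNReal.ofReal (φ ^ p)) atTop (𝓝 1) := by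
  have h : Tendsto (fun φ : ℝ ↦ ENNReal.ofReal (φ ^ p)) atTop (𝓝 0) := by
    simpa using ENNReal.tendsto_ofReal (tendsto_rpow_neg_atTop (neg_pos.2 hp))
  simpa using ENNReal.Tendsto.sub tendsto_const_nhds h (Or.inl ENNReal.one_ne_top)

theorem tendsto_upper_shell_content_atTop_general
    (N : ℕ) (Ω : Set (EuclideanSpace ℝ (Fin N)))
    (r : ℝ) (hr : r < -(N : ℝ)) :
    Filter.Tendsto (fun φ : ℝ => upperShellContent N Ω φ r) Filter.atTop
      (nhds (upperContent N Ω r)) := by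
  have hp : (N : ℝ) + r < 0 := by linarith
  have hlower : Tendsto
      (fun φ : ℝ ↦ upperContent N Ω r * (1 - ENNReal.ofReal (φ ^ ((N : ℝ) + r))))
      atTop (𝓝 (upperContent N Ω r)) := by
    simpa using
      ENNReal.Tendsto.const_mul (tendsto_one_sub_ofReal_rpow_atTop hp) (Or.inl one_ne_zero)
  refine tendsto_of_tendsto_of_tendsto_of_le_of_le' hlower tendsto_const_nhds ?_
    (Eventually.of_forall fun φ ↦ upperShellContent_le_upperContent N Ω φ r)
  filter_upwards [eventually_gt_atTop 1] with φ hφ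
  exact upperContent_mul_le_upperShellContent N Ω hφ hp

theorem tendsto_upper_shell_content_atTop
    (N : ℕ) (Ω : Set (EuclideanSpace ℝ (Fin N))) (hΩ : MeasurableSet Ω)
    (hfin : volume Ω < ⊤) (r : ℝ) (hr : r < -(N : ℝ)) :
    Filter.Tendsto (fun φ : ℝ => upperShellContent N Ω φ r) Filter.atTop
      (nhds (upperContent N Ω r)) :=
  tendsto_upper_shell_content_atTop_general N Ω r hr
end
end

section
/- Let Ω ⊆ ℝ^N be Lebesgue measurable and 1 < φ₁ < φ₂. Then the upper φ-shell Minkowski dimensions at infinity coincide: dim̄_B^{φ₁}(∞,Ω) = dim̄_B^{φ₂}(∞,Ω), while for the lower dimensions dim̲_B^{φ₁}(∞,Ω) ≤ dim̲_B^{φ₂}(∞,Ω). -/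
open MeasureTheory Filter Set
open scoped ENNReal NNReal Topology

noncomputable section

def shellRatio (N : ℕ) (Ω : Set (EuclideanSpace ℝ (Fin N))) (φ r t : ℝ) : ℝ≥0∞ :=
  volume (shell N t (φ * t) ∩ Ω) / ENNReal.ofReal (t ^ ((N : ℝ) + r))

section ShellContent

variable {N : ℕ} {Ω : Set (EuclideanSpace ℝ (Fin N))}

lemma shell_mono_right {a b b' : ℝ} (h : b ≤ b') : shell N a b ⊆ shell N a b' :=
  fun _ hx => ⟨hx.1, hx.2.trans_le h⟩

lemma shell_subset_union (a b c : ℝ) : shell N a c ⊆ shell N a b ∪ shell N b c := by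
  rintro x ⟨hax, hxc⟩
  by_cases hxb : ‖x‖ < b
  · exact Or.inl ⟨hax, hxb⟩
  · exact Or.inr ⟨not_lt.mp hxb, hxc⟩

lemma shell_subset_biUnion_range (f : ℕ → ℝ) (K : ℕ) :
    shell N (f 0) (f K) ⊆ ⋃ k ∈ Finset.range K, shell N (f k) (f (k + 1)) := by
  induction K with
  | zero => rintro x ⟨h₁, h₂⟩; exact absurd h₂ (not_lt.mpr h₁)
  | succ K ih =>
    refine (shell_subset_union (f 0) (f K) (f (K + 1))).trans (union_subset ?_ ?_)
    · exact ih.trans (biUnion_subset_biUnion_left (by simp))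
    · exact subset_biUnion_of_mem (u := fun k => shell N (f k) (f (k + 1))) (by simp)

lemma shellRatio_mono {φ ψ r t : ℝ} (h : φ ≤ ψ) (ht : 0 ≤ t) :
    shellRatio N Ω φ r t ≤ shellRatio N Ω ψ r t :=
  ENNReal.div_le_div_right
    (measure_mono (inter_subset_inter_left _ (shell_mono_right (by nlinarith)))) _

lemma volume_shell_div_eq_shellRatio_mul {φ r s t : ℝ} (hs : 0 < s) (ht : 0 ≤ t) :
    volume (shell N (s * t) (φ * (s * t)) ∩ Ω) / ENNReal.ofReal (t ^ ((N : ℝ) + r)) =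
      shellRatio N Ω φ r (s * t) * ENNReal.ofReal (s ^ ((N : ℝ) + r)) := by
  have hc₀ : ENNReal.ofReal (s ^ ((N : ℝ) + r)) ≠ 0 :=
    (ENNReal.ofReal_pos.mpr (Real.rpow_pos_of_pos hs _)).ne'
  rw [shellRatio, Real.mul_rpow hs.le ht, ENNReal.ofReal_mul (Real.rpow_nonneg hs.le _),
    mul_comm _ (ENNReal.ofReal _), ← mul_div_assoc, ENNReal.mul_div_mul_left _ _ hc₀
      ENNReal.ofReal_ne_top]

lemma upperShellContent_mono {φ ψ : ℝ} (h : φ ≤ ψ) (r : ℝ) :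
    upperShellContent N Ω φ r ≤ upperShellContent N Ω ψ r :=
  limsup_le_limsup ((eventually_ge_atTop 0).mono fun _ ht => shellRatio_mono h ht)

lemma lowerShellContent_mono {φ ψ : ℝ} (h : φ ≤ ψ) (r : ℝ) :
    lowerShellContent N Ω φ r ≤ lowerShellContent N Ω ψ r :=
  liminf_le_liminf ((eventually_ge_atTop 0).mono fun _ ht => shellRatio_mono h ht)

/-- A `ψ`-shell is covered by finitely many `φ`-shells at comparable scales `φ^k t`, so the
`ψ`-ratio is dominated by a fixed finite combination of rescaled `φ`-ratios. -/
lemma upperShellContent_eq_zero_of_one_lt {φ : ℝ} (hφ : 1 < φ) {r : ℝ}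
    (h : upperShellContent N Ω φ r = 0) (ψ : ℝ) : upperShellContent N Ω ψ r = 0 := by
  have hφ₀ : 0 < φ := one_pos.trans hφ
  obtain ⟨K, hK⟩ := pow_unbounded_of_one_lt ψ hφ
  have hratio : Tendsto (shellRatio N Ω φ r) atTop (𝓝 0) :=
    tendsto_of_liminf_eq_limsup (le_antisymm (h ▸ liminf_le_limsup) bot_le) h
  set bound : ℝ → ℝ≥0∞ := fun t => ∑ k ∈ Finset.range K,
    shellRatio N Ω φ r (φ ^ k * t) * ENNReal.ofReal ((φ ^ k) ^ ((N : ℝ) + r))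
  have hbound_tendsto : Tendsto bound atTop (𝓝 0) := by
    simpa using tendsto_finsetSum (Finset.range K) fun k _ =>
      ENNReal.Tendsto.mul_const (hratio.comp (tendsto_id.const_mul_atTop (pow_pos hφ₀ k)))
        (Or.inr ENNReal.ofReal_ne_top)
  have hle_bound : ∀ᶠ t in atTop, shellRatio N Ω ψ r t ≤ bound t := by
    filter_upwards [eventually_ge_atTop 0] with t ht
    have hcover : shell N t (ψ * t) ⊆
        ⋃ k ∈ Finset.range K, shell N (φ ^ k * t) (φ * (φ ^ k * t)) := by
      refine (shell_mono_right (b' := φ ^ K * t) (by nlinarith)).trans ?_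
      simpa [pow_succ, mul_assoc, mul_left_comm φ] using
        shell_subset_biUnion_range (N := N) (fun k => φ ^ k * t) K
    calc shellRatio N Ω ψ r t
        ≤ (∑ k ∈ Finset.range K, volume (shell N (φ ^ k * t) (φ * (φ ^ k * t)) ∩ Ω)) /
            ENNReal.ofReal (t ^ ((N : ℝ) + r)) := by
          refine ENNReal.div_le_div_right ?_ _
          refine (measure_mono (inter_subset_inter_left _ hcover)).trans ?_
          rw [iUnion₂_inter]
          exact measure_biUnion_finset_le _ _
      _ = bound t := by
          simp only [bound, div_eq_mul_inv, Finset.sum_mul]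
          simp only [← div_eq_mul_inv, ←
            volume_shell_div_eq_shellRatio_mul (pow_pos hφ₀ _) ht]
  exact le_antisymm (hbound_tendsto.limsup_eq ▸ limsup_le_limsup hle_bound) bot_le

end ShellContent

theorem shell_dim_independent_of_phi_general
    (N : ℕ) (Ω : Set (EuclideanSpace ℝ (Fin N)))
    (φ₁ φ₂ : ℝ) (hφ₁ : 1 < φ₁) (hφ₁₂ : φ₁ < φ₂) :
    upperShellDim N Ω φ₁ = upperShellDim N Ω φ₂ ∧
    lowerShellDim N Ω φ₁ ≤ lowerShellDim N Ω φ₂ := by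
  have hupper : {r | upperShellContent N Ω φ₁ r = 0} = {r | upperShellContent N Ω φ₂ r = 0} :=
    Set.ext fun r => ⟨fun h => upperShellContent_eq_zero_of_one_lt hφ₁ h φ₂,
      fun h => le_antisymm (h ▸ upperShellContent_mono hφ₁₂.le r) bot_le⟩
  have hlower : {r | lowerShellContent N Ω φ₂ r = 0} ⊆ {r | lowerShellContent N Ω φ₁ r = 0} :=
    fun r h => le_antisymm (h ▸ lowerShellContent_mono hφ₁₂.le r) bot_le
  exact ⟨by rw [upperShellDim, upperShellDim, hupper], sInf_le_sInf (image_mono hlower)⟩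

theorem shell_dim_independent_of_phi
    (N : ℕ) (Ω : Set (EuclideanSpace ℝ (Fin N))) (hΩ : MeasurableSet Ω)
    (φ₁ φ₂ : ℝ) (hφ₁ : 1 < φ₁) (hφ₁₂ : φ₁ < φ₂) :
    upperShellDim N Ω φ₁ = upperShellDim N Ω φ₂ ∧
    lowerShellDim N Ω φ₁ ≤ lowerShellDim N Ω φ₂ :=
  shell_dim_independent_of_phi_general N Ω φ₁ φ₂ hφ₁ hφ₁₂
end
end
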